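/- Under Assumption (lander footprint inscribed in the landing-leg polygon): if z̄_L − z_L < h₀·sin(s̄) and z̄_U − z_L < r̄, then for every lander orientation θ the landing-plane slope s(θ) satisfies s(θ) < s̄ and the roughness satisfies r(θ,γ) < r̄ for all γ in the footprint. Here z̄_L, z_L are the max and min terrain elevation over the union of all possible landing-leg contact regions, z̄_U is the max elevation over the union of all possible lander footprints, and h₀ is the minimum altitude over all triangles formed by any three landing legs. -/

import Mathlib

/-!
The legs lie on the landing plane, so the heights of two legs differ by `1/c` times the change of
`a x + b y` between them. The width of a triangle in any direction is at least its smallest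
altitude, so along `(a, b)` that change reaches `√(a² + b²) h₀`; hence
`tan s = √(a² + b²) / c ≤ (z̄_L − z_L) / h₀ < sin s̄ ≤ tan s̄`.
For the roughness, the plane lies above height `z_L` at the legs, hence over their convex hull,
which contains the footprint; there the terrain is at most `z̄_U`, so the vertical gap is at most
`z̄_U − z_L`, and the distance along the normal is no larger.
-/

open Real

local notation "ℝ²" => EuclideanSpace ℝ (Fin 2)

lemma abs_add_abs_eq_abs_sub_of_mul_nonpos {x y : ℝ} (h : x * y ≤ 0) : |x| + |y| = |x - y| := by
  refine (pow_left_inj₀ (by positivity) (abs_nonneg _) two_ne_zero).1 ?_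
  rw [add_sq, sq_abs, sq_abs, sq_abs, mul_assoc, ← abs_mul, abs_of_nonpos h]
  ring

lemma abs_mul_sub_mul_le_of_mul_nonpos {x y u v S T : ℝ} (hxy : x * y ≤ 0) (hT : |x - y| ≤ T)
    (hu : |u| ≤ S) (hv : |v| ≤ S) : |x * v - u * y| ≤ T * S := by
  have hS : 0 ≤ S := (abs_nonneg u).trans hu
  calc |x * v - u * y| ≤ |x| * |v| + |u| * |y| := by
        simpa only [abs_mul] using abs_sub (x * v) (u * y)
    _ ≤ |x| * S + S * |y| := by gcongr
    _ = |x - y| * S := by rw [← abs_add_abs_eq_abs_sub_of_mul_nonpos hxy]; ring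
    _ ≤ T * S := by gcongr

def twiceSignedArea (t u : Fin 3 → ℝ) : ℝ :=
  (t 1 - t 0) * (u 2 - u 0) - (u 1 - u 0) * (t 2 - t 0)

-- Expanded at the vertex whose `t` lies between the other two, the area splits into two terms
-- bounded by the two `t`-gaps times `S`, and these gaps add up to at most `T`.
lemma abs_twiceSignedArea_le (t u : Fin 3 → ℝ) {T S : ℝ}
    (hT : ∀ i j, |t i - t j| ≤ T) (hS : ∀ i j, |u i - u j| ≤ S) :
    |twiceSignedArea t u| ≤ T * S := by
  unfold twiceSignedArea
  have hmedian : (t 1 - t 0) * (t 2 - t 0) ≤ 0 ∨ (t 2 - t 1) * (t 0 - t 1) ≤ 0 ∨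
      (t 0 - t 2) * (t 1 - t 2) ≤ 0 := by
    by_contra! h
    -- the product of the three left-hand sides is minus a square
    nlinarith [mul_pos (mul_pos h.1 h.2.1) h.2.2,
      sq_nonneg ((t 1 - t 0) * (t 2 - t 0) * (t 2 - t 1))]
  rcases hmedian with h | h | h
  · exact abs_mul_sub_mul_le_of_mul_nonpos h (by simpa using hT 1 2) (hS 1 0) (hS 2 0)
  · rw [show (t 1 - t 0) * (u 2 - u 0) - (u 1 - u 0) * (t 2 - t 0)
        = (t 2 - t 1) * (u 0 - u 1) - (u 2 - u 1) * (t 0 - t 1) by ring]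
    exact abs_mul_sub_mul_le_of_mul_nonpos h (by simpa using hT 2 0) (hS 2 1) (hS 0 1)
  · rw [show (t 1 - t 0) * (u 2 - u 0) - (u 1 - u 0) * (t 2 - t 0)
        = (t 0 - t 2) * (u 1 - u 2) - (u 0 - u 2) * (t 1 - t 2) by ring]
    exact abs_mul_sub_mul_le_of_mul_nonpos h (by simpa using hT 0 1) (hS 0 2) (hS 1 2)

lemma dist_eq_sqrt_fin_two (x y : ℝ²) : dist x y = √((x 0 - y 0) ^ 2 + (x 1 - y 1) ^ 2) := by
  simp [EuclideanSpace.dist_eq, Fin.sum_univ_two, Real.dist_eq, sq_abs]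

lemma lineMap_apply_coord (Q R : ℝ²) (τ : ℝ) (i : Fin 2) :
    AffineMap.lineMap Q R τ i = Q i + τ * (R i - Q i) := by
  simp [AffineMap.lineMap_apply_module']; ring

lemma mul_dist_le_abs_det_of_le_infDist {P Q R : ℝ²} {h : ℝ}
    (hh : h ≤ Metric.infDist P (affineSpan ℝ {Q, R} : Set ℝ²)) :
    h * dist Q R ≤ |(Q 0 - P 0) * (R 1 - P 1) - (Q 1 - P 1) * (R 0 - P 0)| := by
  obtain rfl | hQR := eq_or_ne Q R
  · rw [dist_self, mul_zero]; exact abs_nonneg _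
  have hD : (Q 0 - R 0) ^ 2 + (Q 1 - R 1) ^ 2 ≠ 0 := by
    have := dist_pos.2 hQR
    rw [dist_eq_sqrt_fin_two] at this
    exact (sqrt_pos.1 this).ne'
  -- `lineMap Q R τ` is the foot of the perpendicular from `P`
  set τ := ((P 0 - Q 0) * (R 0 - Q 0) + (P 1 - Q 1) * (R 1 - Q 1)) /
    ((Q 0 - R 0) ^ 2 + (Q 1 - R 1) ^ 2) with hτ
  have hX : h ≤ dist P (AffineMap.lineMap Q R τ) :=
    hh.trans (Metric.infDist_le_dist_of_mem (AffineMap.lineMap_mem_affineSpan_pair τ Q R))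
  have hlagrange : (dist P (AffineMap.lineMap Q R τ) * dist Q R) ^ 2 =
      ((Q 0 - P 0) * (R 1 - P 1) - (Q 1 - P 1) * (R 0 - P 0)) ^ 2 := by
    rw [mul_pow, dist_eq_sqrt_fin_two, dist_eq_sqrt_fin_two, sq_sqrt (by positivity),
      sq_sqrt (by positivity), lineMap_apply_coord, lineMap_apply_coord, hτ]
    field_simp
    ring
  have hPX : dist P (AffineMap.lineMap Q R τ) * dist Q R =
      |(Q 0 - P 0) * (R 1 - P 1) - (Q 1 - P 1) * (R 0 - P 0)| :=
    (pow_left_inj₀ (by positivity) (abs_nonneg _) two_ne_zero).1 (by rw [sq_abs, hlagrange])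
  exact hPX ▸ mul_le_mul_of_nonneg_right hX dist_nonneg

lemma abs_mul_sub_mul_le_sqrt_mul_dist (a b : ℝ) (x y : ℝ²) :
    |a * (x 1 - y 1) - b * (x 0 - y 0)| ≤ √(a ^ 2 + b ^ 2) * dist x y := by
  rw [dist_eq_sqrt_fin_two, ← sqrt_mul (by positivity)]
  apply abs_le_sqrt
  nlinarith [sq_nonneg (a * (x 0 - y 0) + b * (x 1 - y 1))]

lemma mul_dist_le_abs_twiceSignedArea (p : Fin 3 → ℝ²) {h : ℝ}
    (halt : ∀ i j k : Fin 3, i ≠ j → j ≠ k → i ≠ k →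
      h ≤ Metric.infDist (p i) (affineSpan ℝ {p j, p k} : Set ℝ²)) (i j : Fin 3) :
    h * dist (p i) (p j) ≤ |twiceSignedArea (p · 0) (p · 1)| := by
  have key : ∀ i j k, i ≠ j → j ≠ k → i ≠ k →
      ((p i 0 - p k 0) * (p j 1 - p k 1) - (p i 1 - p k 1) * (p j 0 - p k 0) =
          twiceSignedArea (p · 0) (p · 1) ∨
        (p i 0 - p k 0) * (p j 1 - p k 1) - (p i 1 - p k 1) * (p j 0 - p k 0) =
          -twiceSignedArea (p · 0) (p · 1)) →
      h * dist (p i) (p j) ≤ |twiceSignedArea (p · 0) (p · 1)| := fun i j k hij hjk hik hA =>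
    (mul_dist_le_abs_det_of_le_infDist (halt k i j hik.symm hij hjk.symm)).trans_eq
      (abs_eq_abs.2 hA)
  fin_cases i <;> fin_cases j
  · simp
  · exact key 0 1 2 (by decide) (by decide) (by decide) (.inl (by unfold twiceSignedArea; ring))
  · exact key 0 2 1 (by decide) (by decide) (by decide) (.inr (by unfold twiceSignedArea; ring))
  · exact key 1 0 2 (by decide) (by decide) (by decide) (.inr (by unfold twiceSignedArea; ring))
  · simp
  · exact key 1 2 0 (by decide) (by decide) (by decide) (.inl (by unfold twiceSignedArea; ring))
  · exact key 2 0 1 (by decide) (by decide) (by decide) (.inl (by unfold twiceSignedArea; ring))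
  · exact key 2 1 0 (by decide) (by decide) (by decide) (.inr (by unfold twiceSignedArea; ring))
  · simp

-- In the coordinates `(a x + b y, h (a y - b x))` the doubled area is `h (a² + b²)` times the
-- original one, while the second coordinate varies by at most `√(a² + b²)` times the longest side,
-- which is at most the doubled area over `h`.
theorem sqrt_mul_le_of_le_altitude (p : Fin 3 → ℝ²) {a b h W : ℝ}
    (hp : twiceSignedArea (p · 0) (p · 1) ≠ 0)
    (halt : ∀ i j k : Fin 3, i ≠ j → j ≠ k → i ≠ k →
      h ≤ Metric.infDist (p i) (affineSpan ℝ {p j, p k} : Set ℝ²))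
    (hW : ∀ i j, |(a * p i 0 + b * p i 1) - (a * p j 0 + b * p j 1)| ≤ W) :
    √(a ^ 2 + b ^ 2) * h ≤ W := by
  have hW0 : 0 ≤ W := (abs_nonneg _).trans (hW 0 0)
  rcases le_or_gt h 0 with hh | hh
  · exact (mul_nonpos_of_nonneg_of_nonpos (sqrt_nonneg _) hh).trans hW0
  set A := |twiceSignedArea (p · 0) (p · 1)|
  have hA : 0 < A := abs_pos.2 hp
  set m := √(a ^ 2 + b ^ 2)
  have hu : ∀ i j, |h * (a * p i 1 - b * p i 0) - h * (a * p j 1 - b * p j 0)| ≤ m * A := by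
    intro i j
    calc |h * (a * p i 1 - b * p i 0) - h * (a * p j 1 - b * p j 0)|
        = h * |a * (p i 1 - p j 1) - b * (p i 0 - p j 0)| := by
          rw [← mul_sub, abs_mul, abs_of_pos hh]; congr 2; ring
      _ ≤ h * (m * dist (p i) (p j)) := by gcongr; exact abs_mul_sub_mul_le_sqrt_mul_dist a b _ _
      _ = m * (h * dist (p i) (p j)) := by ring
      _ ≤ m * A := by gcongr; exact mul_dist_le_abs_twiceSignedArea p halt i j
  have hdet := abs_twiceSignedArea_le (fun i => a * p i 0 + b * p i 1)
    (fun i => h * (a * p i 1 - b * p i 0)) hW hu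
  rw [show twiceSignedArea (fun i => a * p i 0 + b * p i 1) (fun i => h * (a * p i 1 - b * p i 0))
      = h * m ^ 2 * twiceSignedArea (p · 0) (p · 1) by
        rw [sq_sqrt (by positivity)]; unfold twiceSignedArea; ring,
    abs_mul, abs_of_nonneg (by positivity)] at hdet
  have hm : m * (m * h) ≤ m * W := by nlinarith
  rcases (show 0 ≤ m from sqrt_nonneg _).eq_or_lt with hm0 | hm0
  · rw [← hm0, zero_mul]; exact hW0
  · exact le_of_mul_le_mul_left hm hm0

lemma arccos_div_sqrt_eq_arctan {a b c : ℝ} (hc : 0 < c) :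
    arccos (c / √(a ^ 2 + b ^ 2 + c ^ 2)) = arctan (√(a ^ 2 + b ^ 2) / c) := by
  have h : 1 + (√(a ^ 2 + b ^ 2) / c) ^ 2 = (a ^ 2 + b ^ 2 + c ^ 2) / c ^ 2 := by
    rw [div_pow, sq_sqrt (by positivity)]
    field_simp
    ring
  rw [arctan_eq_arccos (by positivity), h, sqrt_div' _ (sq_nonneg c), sqrt_sq hc.le, inv_div]

lemma arctan_lt_of_lt_tan {x y : ℝ} (hy₁ : -(π / 2) < y) (hy₂ : y < π / 2) (h : x < tan y) :
    arctan x < y := by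
  rw [← arctan_tan hy₁ hy₂]
  exact arctan_strictMono h

lemma linear_le_of_mem_convexHull {s : Set ℝ²} {x : ℝ²} (hx : x ∈ convexHull ℝ s) {a b C : ℝ}
    (h : ∀ y ∈ s, a * y 0 + b * y 1 ≤ C) : a * x 0 + b * x 1 ≤ C := by
  have hlin : IsLinearMap ℝ (fun y : ℝ² => a * y 0 + b * y 1) :=
    ⟨fun y z => by simp only [PiLp.add_apply]; ring,
      fun k y => by simp only [PiLp.smul_apply, smul_eq_mul]; ring⟩
  exact convexHull_min h (convex_halfSpace_le hlin C) hx

lemma sin_le_tan {x : ℝ} (hx₀ : 0 ≤ x) (hx₁ : x < π / 2) : sin x ≤ tan x := by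
  rw [tan_eq_sin_div_cos]
  exact le_div_self (sin_nonneg_of_nonneg_of_le_pi hx₀ (by linarith [pi_pos]))
    (cos_pos_of_mem_Ioo ⟨by linarith [pi_pos], hx₁⟩) (cos_le_one x)

lemma arccos_div_sqrt_lt_of_lt_mul_sin {a b c x : ℝ} (hc : 0 < c) (hx : x ∈ Set.Ioo 0 (π / 2))
    (h : √(a ^ 2 + b ^ 2) < c * sin x) : arccos (c / √(a ^ 2 + b ^ 2 + c ^ 2)) < x := by
  obtain ⟨hx₀, hx₁⟩ := hx
  rw [arccos_div_sqrt_eq_arctan hc]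
  refine arctan_lt_of_lt_tan (by linarith [pi_pos]) hx₁ ((div_lt_iff₀ hc).2 ?_)
  calc √(a ^ 2 + b ^ 2) < c * sin x := h
    _ ≤ tan x * c := by rw [mul_comm]; gcongr; exact sin_le_tan hx₀.le hx₁

lemma div_sqrt_lt_of_le_mul {a b c N X r : ℝ} (hc : 0 < c) (hN : N ≤ c * X) (hX : X < r)
    (hr : 0 < r) : N / √(a ^ 2 + b ^ 2 + c ^ 2) < r := by
  have hcn : c ≤ √(a ^ 2 + b ^ 2 + c ^ 2) :=
    le_sqrt_of_sq_le (by nlinarith [sq_nonneg a, sq_nonneg b])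
  rw [div_lt_iff₀ (hc.trans_le hcn)]
  nlinarith [mul_pos hc (sub_pos.2 hX), mul_nonneg (sub_nonneg.2 hcn) hr.le]

/-- Proposition 2 (conservativeness of the height-difference HD test).
Under the assumption that the lander footprint is inscribed in the landing-leg
polygon, if `z̄_L − z_L < h₀ sin s̄` and `z̄_U − z_L < r̄`, then for every
orientation `θ` the landing-plane slope satisfies `s(θ) < s̄` and the
roughness satisfies `r(θ,γ) < r̄` for all `γ` in the footprint. -/
theorem conservative_hd
    (f : EuclideanSpace ℝ (Fin 2) → ℝ)
    -- horizontal leg positions for each orientation θ, legs ordered CCW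
    (q : ℝ → Fin 3 → EuclideanSpace ℝ (Fin 2))
    -- footprint for each orientation, and the unions L and U
    (Ufp : ℝ → Set (EuclideanSpace ℝ (Fin 2)))
    (L U : Set (EuclideanSpace ℝ (Fin 2)))
    (hLegL : ∀ θ i, q θ i ∈ L)
    (hUfpU : ∀ θ, Ufp θ ⊆ U)
    -- Assumption 1: footprint inscribed in the landing-leg polygon
    (hInscribed : ∀ θ, Ufp θ ⊆ convexHull ℝ {q θ 0, q θ 1, q θ 2})
    -- landing-plane normal n(θ) = (a θ, b θ, c θ) and offset d θ
    (a b c d : ℝ → ℝ)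
    (ha : ∀ θ, a θ = (q θ 1 1 - q θ 0 1) * (f (q θ 2) - f (q θ 0))
        - (f (q θ 1) - f (q θ 0)) * (q θ 2 1 - q θ 0 1))
    (hb : ∀ θ, b θ = (f (q θ 1) - f (q θ 0)) * (q θ 2 0 - q θ 0 0)
        - (q θ 1 0 - q θ 0 0) * (f (q θ 2) - f (q θ 0)))
    (hc : ∀ θ, c θ = (q θ 1 0 - q θ 0 0) * (q θ 2 1 - q θ 0 1)
        - (q θ 1 1 - q θ 0 1) * (q θ 2 0 - q θ 0 0))
    (hccw : ∀ θ, 0 < c θ)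
    (hd : ∀ θ, d θ = -(a θ * q θ 0 0 + b θ * q θ 0 1 + c θ * f (q θ 0)))
    -- slope and roughness
    (s : ℝ → ℝ)
    (hs : ∀ θ, s θ = arccos (c θ / Real.sqrt (a θ ^ 2 + b θ ^ 2 + c θ ^ 2)))
    (r : ℝ → EuclideanSpace ℝ (Fin 2) → ℝ)
    (hr : ∀ θ γ, r θ γ = (a θ * γ 0 + b θ * γ 1 + c θ * f γ + d θ) /
        Real.sqrt (a θ ^ 2 + b θ ^ 2 + c θ ^ 2))
    -- extreme elevations over L and U
    (zLmax zLmin zUmax : ℝ)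
    (hzLmax : IsGreatest (f '' L) zLmax)
    (hzLmin : IsLeast (f '' L) zLmin)
    (hzUmax : IsGreatest (f '' U) zUmax)
    -- h₀: minimum altitude over all leg triangles
    (h₀ : ℝ) (hh₀pos : 0 < h₀)
    (hh₀ : ∀ θ, ∀ i j k : Fin 3, i ≠ j → j ≠ k → i ≠ k →
      h₀ ≤ Metric.infDist (q θ i)
        (affineSpan ℝ {q θ j, q θ k} : Set (EuclideanSpace ℝ (Fin 2))))
    -- thresholds
    (sbar rbar : ℝ) (hsbar : sbar ∈ Set.Ioo 0 (π / 2)) (hrbar : 0 < rbar)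
    -- the conservative HD test passes
    (hslopeTest : zLmax - zLmin < h₀ * sin sbar)
    (hroughTest : zUmax - zLmin < rbar) :
    ∀ θ, s θ < sbar ∧ ∀ γ ∈ Ufp θ, r θ γ < rbar := by
  intro θ
  have hcθ := hccw θ
  have hplane : ∀ i, a θ * q θ i 0 + b θ * q θ i 1 = -(c θ * f (q θ i)) - d θ := by
    intro i
    rw [hd θ]
    fin_cases i <;> simp only [Fin.zero_eta, Fin.mk_one, Fin.reduceFinMk] <;>
      rw [ha θ, hb θ, hc θ] <;> ring
  have hlegs : ∀ i, zLmin ≤ f (q θ i) ∧ f (q θ i) ≤ zLmax := fun i =>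
    ⟨hzLmin.2 ⟨q θ i, hLegL θ i, rfl⟩, hzLmax.2 ⟨q θ i, hLegL θ i, rfl⟩⟩
  refine ⟨?_, fun γ hγ => ?_⟩
  · have hwidth : ∀ i j, |(a θ * q θ i 0 + b θ * q θ i 1) - (a θ * q θ j 0 + b θ * q θ j 1)|
        ≤ c θ * (zLmax - zLmin) := by
      intro i j
      rw [hplane, hplane, sub_sub_sub_cancel_right, neg_sub_neg, ← mul_sub, abs_mul,
        abs_of_pos hcθ]
      exact mul_le_mul_of_nonneg_left
        (abs_sub_le_of_le_of_le (hlegs j).1 (hlegs j).2 (hlegs i).1 (hlegs i).2) hcθ.le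
    have hgrad := sqrt_mul_le_of_le_altitude (q θ)
      (by simpa only [twiceSignedArea, ← hc θ] using hcθ.ne') (hh₀ θ) hwidth
    rw [hs θ]
    refine arccos_div_sqrt_lt_of_lt_mul_sin hcθ hsbar (lt_of_mul_lt_mul_right ?_ hh₀pos.le)
    calc √(a θ ^ 2 + b θ ^ 2) * h₀ ≤ c θ * (zLmax - zLmin) := hgrad
      _ < c θ * (h₀ * sin sbar) := by gcongr
      _ = c θ * sin sbar * h₀ := by ring
  · have hfoot : a θ * γ 0 + b θ * γ 1 ≤ -(c θ * zLmin) - d θ := by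
      refine linear_le_of_mem_convexHull (hInscribed θ hγ) ?_
      rintro _ (rfl | rfl | rfl) <;> rw [hplane] <;> gcongr <;> exact (hlegs _).1
    have hfγ : f γ ≤ zUmax := hzUmax.2 ⟨γ, hUfpU θ hγ, rfl⟩
    rw [hr θ γ]
    exact div_sqrt_lt_of_le_mul hcθ (by nlinarith) hroughTest hrbar
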